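/- Let O ⊆ ℝ^M be a bounded open set and g : ℝ → ℝ a convex function that is strictly convex on an open interval (a,b) ⊆ ℝ. Suppose v_n ⇀ v and g(v_n) ⇀ ḡ weakly in L¹(O), and ḡ = g(v) almost everywhere on O. Then, after passing to a subsequence, v_n(y) → v(y) for almost every y in the set {y ∈ O : v(y) ∈ (a,b)}. -/

import Mathlib

/-!
Put `w n = (v n + v) / 2` and let `D n = (g (v n) + g v) / 2 - g (w n) ≥ 0` be the midpoint gap.
Testing against `1` gives `∫ g (v n) → ∫ g v`, and since `w n ⇀ v`, weak lower semicontinuity of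
`u ↦ ∫ g u` gives `∫ g v ≤ liminf ∫ g (w n)`; hence `∫ D n → 0`, so `D n → 0` in measure and almost
everywhere along a subsequence. Where `v y ∈ (a, b)`, strict convexity makes the gap
`midpointGap g · (v y)` positive off `v y`, and convexity makes it monotone in the distance to
`v y` on either side, so `D n y → 0` forces `v n y → v y`.

The lower semicontinuity comes from the tangent lines of `g` based at the truncations of `v` to
`[-K, K]`: they lie below `g`, are affine in the free variable with bounded measurable coefficients
(so weak convergence applies to them), and converge to `g ∘ v` as `K → ∞`, dominated by
`|g ∘ v|` plus an affine function of `v`.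
-/

open MeasureTheory Filter Set Topology

section Convex

variable {g : ℝ → ℝ}

lemma ConvexOn.slope_le_slope {s : Set ℝ} (hg : ConvexOn ℝ s g) {x₁ y₁ x₂ y₂ : ℝ}
    (hx₁ : x₁ ∈ s) (hy₁ : y₁ ∈ s) (hx₂ : x₂ ∈ s) (hy₂ : y₂ ∈ s)
    (hx : x₁ ≤ x₂) (hy : y₁ ≤ y₂) (h₁ : x₁ < y₁) (h₂ : x₂ < y₂) :
    slope g x₁ y₁ ≤ slope g x₂ y₂ :=
  calc slope g x₁ y₁ ≤ slope g x₁ y₂ :=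
        hg.slope_mono hx₁ ⟨hy₁, h₁.ne'⟩ ⟨hy₂, (h₁.trans_le hy).ne'⟩ hy
    _ = slope g y₂ x₁ := slope_comm g x₁ y₂
    _ ≤ slope g y₂ x₂ := hg.slope_mono hy₂ ⟨hx₁, (h₁.trans_le hy).ne⟩ ⟨hx₂, h₂.ne⟩ hx
    _ = slope g x₂ y₂ := slope_comm g y₂ x₂

noncomputable def midpointGap (g : ℝ → ℝ) (x y : ℝ) : ℝ := (g x + g y) / 2 - g ((x + y) / 2)

lemma ConvexOn.midpointGap_nonneg {s : Set ℝ} (hg : ConvexOn ℝ s g) {x y : ℝ} (hx : x ∈ s)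
    (hy : y ∈ s) : 0 ≤ midpointGap g x y := by
  have := hg.2 hx hy (by norm_num : (0:ℝ) ≤ 1/2) (by norm_num : (0:ℝ) ≤ 1/2) (by norm_num)
  rw [show (1 / 2 : ℝ) • x + (1 / 2 : ℝ) • y = (x + y) / 2 by simp only [smul_eq_mul]; ring] at this
  simp only [smul_eq_mul] at this
  rw [midpointGap]
  linarith

lemma StrictConvexOn.midpointGap_pos {s : Set ℝ} (hg : StrictConvexOn ℝ s g) {x y : ℝ}
    (hx : x ∈ s) (hy : y ∈ s) (hxy : x ≠ y) : 0 < midpointGap g x y := by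
  have := hg.2 hx hy hxy (by norm_num : (0:ℝ) < 1/2) (by norm_num : (0:ℝ) < 1/2) (by norm_num)
  rw [show (1 / 2 : ℝ) • x + (1 / 2 : ℝ) • y = (x + y) / 2 by simp only [smul_eq_mul]; ring] at this
  simp only [smul_eq_mul] at this
  rw [midpointGap]
  linarith

lemma ConvexOn.monotoneOn_midpointGap (hg : ConvexOn ℝ univ g) (c : ℝ) :
    MonotoneOn (midpointGap g · c) (Ici c) := by
  intro u₁ (hc : c ≤ u₁) u₂ _ hu
  rcases hu.eq_or_lt with rfl | hu
  · rfl
  have := hg.slope_le_slope trivial trivial trivial trivial (x₁ := (u₁ + c) / 2)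
    (y₁ := (u₂ + c) / 2) (by linarith) (by linarith) (by linarith) hu
  rw [slope_def_field, slope_def_field, div_le_div_iff₀ (by linarith) (by linarith)] at this
  simp only [midpointGap]
  nlinarith

lemma ConvexOn.antitoneOn_midpointGap (hg : ConvexOn ℝ univ g) (c : ℝ) :
    AntitoneOn (midpointGap g · c) (Iic c) := by
  intro u₁ _ u₂ (hc : u₂ ≤ c) hu
  rcases hu.eq_or_lt with rfl | hu
  · rfl
  have := hg.slope_le_slope trivial trivial trivial trivial (x₂ := (u₁ + c) / 2)
    (y₂ := (u₂ + c) / 2) (by linarith) (by linarith) hu (by linarith)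
  rw [slope_def_field, slope_def_field, div_le_div_iff₀ (by linarith) (by linarith)] at this
  simp only [midpointGap]
  nlinarith

lemma tendsto_of_tendsto_midpointGap_zero (hg : ConvexOn ℝ univ g) {a b : ℝ}
    (hgs : StrictConvexOn ℝ (Ioo a b) g) {c : ℝ} (hc : c ∈ Ioo a b) {u : ℕ → ℝ}
    (hu : Tendsto (fun n ↦ midpointGap g (u n) c) atTop (𝓝 0)) :
    Tendsto u atTop (𝓝 c) := by
  rw [tendsto_order]
  constructor
  · intro l hl
    set l' := max l ((a + c) / 2)
    have hl'c : l' < c := max_lt hl (by linarith [hc.1])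
    have hpos : 0 < midpointGap g l' c :=
      hgs.midpointGap_pos ⟨by linarith [le_max_right l ((a + c) / 2), hc.1], hl'c.trans hc.2⟩ hc
        hl'c.ne
    filter_upwards [(tendsto_order.1 hu).2 _ hpos] with n hn
    by_contra! h
    have hul' : u n ≤ l' := h.trans (le_max_left _ _)
    exact (hn.trans_le (hg.antitoneOn_midpointGap c (hul'.trans hl'c.le) hl'c.le hul')).false
  · intro r hr
    set r' := min r ((c + b) / 2)
    have hcr' : c < r' := lt_min hr (by linarith [hc.2])
    have hpos : 0 < midpointGap g r' c :=
      hgs.midpointGap_pos ⟨hc.1.trans hcr', by linarith [min_le_right r ((c + b) / 2), hc.2]⟩ hc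
        hcr'.ne'
    filter_upwards [(tendsto_order.1 hu).2 _ hpos] with n hn
    by_contra! h
    have hr'u : r' ≤ u n := (min_le_left _ _).trans h
    exact (hn.trans_le (hg.monotoneOn_midpointGap c hcr'.le (hcr'.le.trans hr'u) hr'u)).false

end Convex

section Tangent

variable {g : ℝ → ℝ}

-- The right derivative of a convex function on `ℝ` is a subgradient.
noncomputable def tangentLine (g : ℝ → ℝ) (c w : ℝ) : ℝ :=
  g c + derivWithin g (Ioi c) c * (w - c)

lemma ConvexOn.tangentLine_le (hg : ConvexOn ℝ univ g) (c w : ℝ) : tangentLine g c w ≤ g w := by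
  have hc : c ∈ interior univ := by simp
  rw [tangentLine]
  rcases lt_trichotomy w c with h | rfl | h
  · have := (hg.slope_le_leftDeriv_of_mem_interior trivial hc h).trans
      (hg.leftDeriv_le_rightDeriv_of_mem_interior hc)
    rw [slope_def_field, div_le_iff₀ (sub_pos.2 h)] at this
    nlinarith
  · simp
  · have := hg.rightDeriv_le_slope_of_mem_interior hc trivial h
    rw [slope_def_field, le_div_iff₀ (sub_pos.2 h)] at this
    nlinarith

lemma ConvexOn.monotone_rightDeriv (hg : ConvexOn ℝ univ g) :
    Monotone fun c ↦ derivWithin g (Ioi c) c := fun _ _ hxy ↦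
  hg.monotoneOn_rightDeriv (by simp) (by simp) hxy

lemma ConvexOn.measurable_tangentLine (hg : ConvexOn ℝ univ g) :
    Measurable (Function.uncurry (tangentLine g)) := by
  have hgc : Continuous g := by simpa using hg.continuousOn_interior
  exact (hgc.measurable.comp measurable_fst).add
    ((hg.monotone_rightDeriv.measurable.comp measurable_fst).mul
      (measurable_snd.sub measurable_fst))

lemma ConvexOn.tangentLine_zero_le_tangentLine_clamp (hg : ConvexOn ℝ univ g) {K : ℝ}
    (hK : 0 ≤ K) (t : ℝ) : tangentLine g 0 t ≤ tangentLine g (max (-K) (min t K)) t := by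
  set c := max (-K) (min t K)
  have hbase := hg.tangentLine_le 0 c
  have hslope : 0 ≤ (derivWithin g (Ioi c) c - derivWithin g (Ioi 0) 0) * (t - c) := by
    rcases le_total t (-K) with h | h
    · have hc : c = -K := max_eq_left (min_le_left _ _ |>.trans h)
      exact mul_nonneg_of_nonpos_of_nonpos (sub_nonpos.2 (hg.monotone_rightDeriv (by linarith)))
        (by linarith)
    rcases le_total t K with h' | h'
    · have hc : c = t := by simp [c, h, h']
      simp [hc]
    · have hc : c = K := by simp [c, h', hK]
      exact mul_nonneg (sub_nonneg.2 (hg.monotone_rightDeriv (by linarith))) (by linarith)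
  simp only [tangentLine] at hbase ⊢
  nlinarith

end Tangent

section WeakL1

variable {α ι : Type*} [MeasurableSpace α] {μ : Measure α} {l : Filter ι}
  {f g : ι → α → ℝ} {f' g' : α → ℝ}

def TendstoWeakL1 (μ : Measure α) (f : ι → α → ℝ) (l : Filter ι) (f' : α → ℝ) : Prop :=
  ∀ φ : α → ℝ, Measurable φ → (∃ C, ∀ x, |φ x| ≤ C) →
    Tendsto (fun n ↦ ∫ x, f n x * φ x ∂μ) l (𝓝 (∫ x, f' x * φ x ∂μ))

lemma MeasureTheory.Integrable.mul_of_abs_le {h φ : α → ℝ} {C : ℝ} (hh : Integrable h μ)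
    (hφ : Measurable φ) (hφC : ∀ x, |φ x| ≤ C) : Integrable (fun x ↦ h x * φ x) μ :=
  hh.mul_bdd hφ.aestronglyMeasurable (ae_of_all _ hφC)

lemma tendstoWeakL1_const : TendstoWeakL1 μ (fun _ : ι ↦ f') l f' :=
  fun _ _ _ ↦ tendsto_const_nhds

lemma TendstoWeakL1.add (hf : ∀ n, Integrable (f n) μ) (hg : ∀ n, Integrable (g n) μ)
    (hf' : Integrable f' μ) (hg' : Integrable g' μ)
    (hfl : TendstoWeakL1 μ f l f') (hgl : TendstoWeakL1 μ g l g') :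
    TendstoWeakL1 μ (fun n x ↦ f n x + g n x) l (fun x ↦ f' x + g' x) := by
  rintro φ hφ ⟨C, hC⟩
  simp_rw [add_mul]
  rw [integral_add (hf'.mul_of_abs_le hφ hC) (hg'.mul_of_abs_le hφ hC)]
  refine ((hfl φ hφ ⟨C, hC⟩).add (hgl φ hφ ⟨C, hC⟩)).congr fun n ↦ ?_
  rw [integral_add ((hf n).mul_of_abs_le hφ hC) ((hg n).mul_of_abs_le hφ hC)]

lemma TendstoWeakL1.div_const (hfl : TendstoWeakL1 μ f l f') (c : ℝ) :
    TendstoWeakL1 μ (fun n x ↦ f n x / c) l (fun x ↦ f' x / c) := by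
  intro φ hφ hC
  simp_rw [div_mul_eq_mul_div, integral_div]
  exact (hfl φ hφ hC).div_const c

lemma TendstoWeakL1.tendsto_integral (hfl : TendstoWeakL1 μ f l f') :
    Tendsto (fun n ↦ ∫ x, f n x ∂μ) l (𝓝 (∫ x, f' x ∂μ)) := by
  simpa using hfl 1 measurable_const ⟨1, fun _ ↦ by simp⟩

lemma integrable_add_mul_of_abs_le [IsFiniteMeasure μ] {A B h : α → ℝ} {C D : ℝ}
    (hA : Measurable A) (hAC : ∀ x, |A x| ≤ C) (hB : Measurable B) (hBD : ∀ x, |B x| ≤ D)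
    (hh : Integrable h μ) : Integrable (fun x ↦ A x + B x * h x) μ :=
  ((integrable_const C).mono' hA.aestronglyMeasurable (ae_of_all _ hAC)).add
    (hh.bdd_mul hB.aestronglyMeasurable (ae_of_all _ hBD))

lemma TendstoWeakL1.tendsto_integral_add_mul [IsFiniteMeasure μ] {A B : α → ℝ} {C D : ℝ}
    (hA : Measurable A) (hAC : ∀ x, |A x| ≤ C) (hB : Measurable B) (hBD : ∀ x, |B x| ≤ D)
    (hf : ∀ n, Integrable (f n) μ) (hf' : Integrable f' μ) (hfl : TendstoWeakL1 μ f l f') :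
    Tendsto (fun n ↦ ∫ x, A x + B x * f n x ∂μ) l (𝓝 (∫ x, A x + B x * f' x ∂μ)) := by
  have hAi : Integrable A μ :=
    (integrable_const C).mono' hA.aestronglyMeasurable (ae_of_all _ hAC)
  simp_rw [mul_comm (B _)]
  rw [integral_add hAi (hf'.mul_of_abs_le hB hBD)]
  refine (tendsto_const_nhds.add (hfl B hB ⟨D, hBD⟩)).congr fun n ↦ ?_
  rw [integral_add hAi ((hf n).mul_of_abs_le hB hBD)]

lemma tendstoInMeasure_zero_of_tendsto_integral (hf : ∀ n, Integrable (f n) μ)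
    (hf₀ : ∀ n, 0 ≤ᵐ[μ] f n) (h : Tendsto (fun n ↦ ∫ x, f n x ∂μ) l (𝓝 0)) :
    TendstoInMeasure μ f l 0 := by
  refine tendstoInMeasure_of_tendsto_eLpNorm one_ne_zero (fun n ↦ (hf n).1)
    aestronglyMeasurable_const ?_
  have hnorm (n : ι) : eLpNorm (f n - 0) 1 μ = ENNReal.ofReal (∫ x, f n x ∂μ) := by
    rw [sub_zero, eLpNorm_one_eq_lintegral_enorm,
      ofReal_integral_eq_lintegral_ofReal (hf n) (hf₀ n)]
    exact lintegral_congr_ae ((hf₀ n).mono fun x hx ↦ Real.enorm_of_nonneg hx)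
  simp_rw [hnorm]
  simpa using ENNReal.tendsto_ofReal h

end WeakL1

section Semicontinuity

variable {α : Type*} [MeasurableSpace α] {μ : Measure α} [IsFiniteMeasure μ] {g : ℝ → ℝ}
  {f : ℕ → α → ℝ} {f' : α → ℝ}

lemma ConvexOn.tendsto_integral_tangentLine_clamp (hg : ConvexOn ℝ univ g) {u : α → ℝ}
    (hu : Integrable u μ) (hgu : Integrable (fun x ↦ g (u x)) μ) :
    Tendsto (fun K : ℕ ↦ ∫ x, tangentLine g (max (-K) (min (u x) K)) (u x) ∂μ) atTop
      (𝓝 (∫ x, g (u x) ∂μ)) := by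
  have hlow : Integrable (fun x ↦ tangentLine g 0 (u x)) μ :=
    (integrable_const _).add ((hu.sub (integrable_const 0)).const_mul _)
  refine tendsto_integral_of_dominated_convergence (fun x ↦ |g (u x)| + |tangentLine g 0 (u x)|)
    (fun K ↦ ?_) (hgu.abs.add hlow.abs) (fun K ↦ ae_of_all _ fun x ↦ ?_) (ae_of_all _ fun x ↦ ?_)
  · have hclamp : Measurable fun t : ℝ ↦ max (-(K : ℝ)) (min t K) := by fun_prop
    exact (hg.measurable_tangentLine.comp (hclamp.prodMk measurable_id)).comp_aemeasurable
      hu.aemeasurable |>.aestronglyMeasurable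
  · rw [Real.norm_eq_abs]
    refine (abs_le_max_abs_abs (hg.tangentLine_zero_le_tangentLine_clamp K.cast_nonneg _)
      (hg.tangentLine_le _ _)).trans ?_
    rw [max_comm]
    exact max_le_add_of_nonneg (abs_nonneg _) (abs_nonneg _)
  · refine tendsto_const_nhds.congr' ?_
    filter_upwards [tendsto_natCast_atTop_atTop.eventually_ge_atTop |u x|] with K hK
    have hclamp : max (-(K : ℝ)) (min (u x) K) = u x := by
      rw [abs_le] at hK
      rw [min_eq_left hK.2, max_eq_right hK.1]
    simp [hclamp, tangentLine]

lemma ConvexOn.exists_tangentLine_eq_add_mul (hg : ConvexOn ℝ univ g) {c : α → ℝ}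
    (hc : Measurable c) {K : ℝ} (hcK : ∀ x, |c x| ≤ K) :
    ∃ (A B : α → ℝ) (C D : ℝ), Measurable A ∧ (∀ x, |A x| ≤ C) ∧ Measurable B ∧
      (∀ x, |B x| ≤ D) ∧ ∀ x w, tangentLine g (c x) w = A x + B x * w := by
  set s := fun t ↦ derivWithin g (Ioi t) t
  have hgc : Continuous g := by simpa using hg.continuousOn_interior
  obtain ⟨G, hG⟩ :=
    (isCompact_Icc (a := -K) (b := K)).exists_bound_of_continuousOn hgc.continuousOn
  have hcIcc (x : α) : c x ∈ Icc (-K) K := abs_le.1 (hcK x)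
  have hB (x : α) : |s (c x)| ≤ max |s (-K)| |s K| :=
    abs_le_max_abs_abs (hg.monotone_rightDeriv (hcIcc x).1) (hg.monotone_rightDeriv (hcIcc x).2)
  refine ⟨fun x ↦ g (c x) - s (c x) * c x, fun x ↦ s (c x), G + max |s (-K)| |s K| * K,
    max |s (-K)| |s K|, ?_, fun x ↦ ?_, hg.monotone_rightDeriv.measurable.comp hc, hB,
    fun x w ↦ by simp only [tangentLine, s]; ring⟩
  · exact (hgc.measurable.comp hc).sub ((hg.monotone_rightDeriv.measurable.comp hc).mul hc)
  · calc |g (c x) - s (c x) * c x| ≤ |g (c x)| + |s (c x)| * |c x| := by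
          rw [← abs_mul]; exact abs_sub _ _
      _ ≤ G + max |s (-K)| |s K| * K := by
          gcongr
          · exact hG _ (hcIcc x)
          · exact hB x
          · exact hcK x

lemma ConvexOn.eventually_integral_comp_sub_le (hg : ConvexOn ℝ univ g)
    (hf : ∀ n, Integrable (f n) μ) (hf' : Integrable f' μ)
    (hgf : ∀ n, Integrable (fun x ↦ g (f n x)) μ) (hgf' : Integrable (fun x ↦ g (f' x)) μ)
    (hfl : TendstoWeakL1 μ f atTop f') {δ : ℝ} (hδ : 0 < δ) :
    ∀ᶠ n in atTop, ∫ x, g (f' x) ∂μ - δ ≤ ∫ x, g (f n x) ∂μ := by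
  obtain ⟨K, hK⟩ := ((hg.tendsto_integral_tangentLine_clamp hf' hgf').eventually
    (lt_mem_nhds (by linarith : ∫ x, g (f' x) ∂μ - δ / 2 < ∫ x, g (f' x) ∂μ))).exists
  set fm := hf'.1.mk f'
  set c : α → ℝ := fun x ↦ max (-K) (min (fm x) K)
  have hc : Measurable c := by
    have := hf'.1.stronglyMeasurable_mk.measurable
    fun_prop
  have hcK (x : α) : |c x| ≤ K :=
    abs_le.2 ⟨le_max_left _ _, max_le (neg_le_self K.cast_nonneg) (min_le_right _ _)⟩
  have hcf' : ∫ x, tangentLine g (c x) (f' x) ∂μ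
      = ∫ x, tangentLine g (max (-K) (min (f' x) K)) (f' x) ∂μ :=
    integral_congr_ae (hf'.1.ae_eq_mk.mono fun x hx ↦ by simp only [c, fm, hx])
  obtain ⟨A, B, C, D, hA, hAC, hB, hBD, hAB⟩ := hg.exists_tangentLine_eq_add_mul hc hcK
  have hlim := hfl.tendsto_integral_add_mul hA hAC hB hBD hf hf'
  simp_rw [← hAB, hcf'] at hlim
  filter_upwards [hlim.eventually (lt_mem_nhds (sub_lt_self _ (half_pos hδ)))] with n hn
  have hle : ∫ x, tangentLine g (c x) (f n x) ∂μ ≤ ∫ x, g (f n x) ∂μ := by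
    refine integral_mono ?_ (hgf n) fun x ↦ hg.tangentLine_le _ _
    simpa only [hAB] using integrable_add_mul_of_abs_le hA hAC hB hBD (hf n)
  linarith

lemma ConvexOn.integrable_comp_midpoint (hg : ConvexOn ℝ univ g) {u w : α → ℝ}
    (hu : Integrable u μ) (hw : Integrable w μ) (hgu : Integrable (fun x ↦ g (u x)) μ)
    (hgw : Integrable (fun x ↦ g (w x)) μ) :
    Integrable (fun x ↦ g ((u x + w x) / 2)) μ := by
  have hgc : Continuous g := by simpa using hg.continuousOn_interior
  refine integrable_of_le_of_le (g₁ := fun x ↦ tangentLine g 0 ((u x + w x) / 2))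
    (g₂ := fun x ↦ (g (u x) + g (w x)) / 2)
    (hgc.comp_aestronglyMeasurable ((hu.add hw).div_const 2).1)
    (ae_of_all _ fun x ↦ hg.tangentLine_le _ _)
    (ae_of_all _ fun x ↦ sub_nonneg.1 (hg.midpointGap_nonneg trivial trivial))
    ?_ ((hgu.add hgw).div_const 2)
  exact (integrable_const _).add
    ((((hu.add hw).div_const 2).sub (integrable_const 0)).const_mul _)

lemma ConvexOn.tendsto_integral_midpointGap (hg : ConvexOn ℝ univ g)
    (hf : ∀ n, Integrable (f n) μ) (hf' : Integrable f' μ)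
    (hgf : ∀ n, Integrable (fun x ↦ g (f n x)) μ) (hgf' : Integrable (fun x ↦ g (f' x)) μ)
    (hfl : TendstoWeakL1 μ f atTop f')
    (hgfl : Tendsto (fun n ↦ ∫ x, g (f n x) ∂μ) atTop (𝓝 (∫ x, g (f' x) ∂μ))) :
    Tendsto (fun n ↦ ∫ x, midpointGap g (f n x) (f' x) ∂μ) atTop (𝓝 0) := by
  have hmid (n : ℕ) := hg.integrable_comp_midpoint (hf n) hf' (hgf n) hgf'
  have hgap (n : ℕ) : ∫ x, midpointGap g (f n x) (f' x) ∂μ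
      = (∫ x, g (f n x) ∂μ + ∫ x, g (f' x) ∂μ) / 2 - ∫ x, g ((f n x + f' x) / 2) ∂μ := by
    rw [← integral_add (hgf n) hgf', ← integral_div]
    exact integral_sub (((hgf n).add hgf').div_const 2) (hmid n)
  have hmidl :
      TendstoWeakL1 μ (fun n x ↦ (f n x + f' x) / 2) atTop (fun x ↦ (f' x + f' x) / 2) :=
    (hfl.add hf (fun _ ↦ hf') hf' hf' tendstoWeakL1_const).div_const 2
  simp_rw [add_self_div_two] at hmidl
  rw [tendsto_order]
  refine ⟨fun r hr ↦ Eventually.of_forall fun n ↦ hr.trans_le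
    (integral_nonneg fun x ↦ hg.midpointGap_nonneg trivial trivial), fun r hr ↦ ?_⟩
  filter_upwards [hgfl.eventually (gt_mem_nhds (lt_add_of_pos_right _ hr)),
    hg.eventually_integral_comp_sub_le (f := fun n x ↦ (f n x + f' x) / 2)
      (fun n ↦ ((hf n).add hf').div_const 2) hf' hmid hgf' hmidl (half_pos hr)] with n hn hn'
  rw [hgap]
  linarith

lemma ConvexOn.tendstoInMeasure_midpointGap (hg : ConvexOn ℝ univ g)
    (hf : ∀ n, Integrable (f n) μ) (hf' : Integrable f' μ)
    (hgf : ∀ n, Integrable (fun x ↦ g (f n x)) μ) (hgf' : Integrable (fun x ↦ g (f' x)) μ)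
    (hfl : TendstoWeakL1 μ f atTop f')
    (hgfl : Tendsto (fun n ↦ ∫ x, g (f n x) ∂μ) atTop (𝓝 (∫ x, g (f' x) ∂μ))) :
    TendstoInMeasure μ (fun n x ↦ midpointGap g (f n x) (f' x)) atTop 0 :=
  tendstoInMeasure_zero_of_tendsto_integral
    (fun n ↦ (((hgf n).add hgf').div_const 2).sub
      (hg.integrable_comp_midpoint (hf n) hf' (hgf n) hgf'))
    (fun _ ↦ ae_of_all _ fun _ ↦ hg.midpointGap_nonneg trivial trivial)
    (hg.tendsto_integral_midpointGap hf hf' hgf hgf' hfl hgfl)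

end Semicontinuity

theorem stmt1_general
    (M : ℕ) (O : Set (EuclideanSpace ℝ (Fin M)))
    (hOb : Bornology.IsBounded O)
    (g : ℝ → ℝ) (hgc : ConvexOn ℝ Set.univ g)
    (a b : ℝ) (hgsc : StrictConvexOn ℝ (Set.Ioo a b) g)
    (v : ℕ → EuclideanSpace ℝ (Fin M) → ℝ) (vlim gbar : EuclideanSpace ℝ (Fin M) → ℝ)
    (hvint : ∀ n, IntegrableOn (v n) O)
    (hvlimint : IntegrableOn vlim O)
    (hgvint : ∀ n, IntegrableOn (fun x => g (v n x)) O)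
    (hgbarint : IntegrableOn gbar O)
    (hweakv : ∀ φ : EuclideanSpace ℝ (Fin M) → ℝ, Measurable φ → (∃ C, ∀ x, |φ x| ≤ C) →
      Tendsto (fun n => ∫ x in O, v n x * φ x) atTop (𝓝 (∫ x in O, vlim x * φ x)))
    (hweakg : ∀ φ : EuclideanSpace ℝ (Fin M) → ℝ, Measurable φ → (∃ C, ∀ x, |φ x| ≤ C) →
      Tendsto (fun n => ∫ x in O, g (v n x) * φ x) atTop (𝓝 (∫ x in O, gbar x * φ x)))
    (heq : ∀ᵐ x ∂(volume.restrict O), gbar x = g (vlim x)) :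
    ∃ φ : ℕ → ℕ, StrictMono φ ∧
      ∀ᵐ y ∂(volume.restrict O), vlim y ∈ Set.Ioo a b →
        Tendsto (fun n => v (φ n) y) atTop (𝓝 (vlim y)) := by
  have : IsFiniteMeasure (volume.restrict O) := isFiniteMeasure_restrict.2 hOb.measure_lt_top.ne
  have hgvlim : IntegrableOn (fun x ↦ g (vlim x)) O := hgbarint.congr_fun_ae heq
  have hgvl : Tendsto (fun n ↦ ∫ x in O, g (v n x)) atTop (𝓝 (∫ x in O, g (vlim x))) := by
    rw [← integral_congr_ae heq]
    exact TendstoWeakL1.tendsto_integral hweakg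
  obtain ⟨φ, hφ, hae⟩ := (hgc.tendstoInMeasure_midpointGap hvint hvlimint hgvint hgvlim hweakv
    hgvl).exists_seq_tendsto_ae
  refine ⟨φ, hφ, ?_⟩
  filter_upwards [hae] with y hy hyab
  exact tendsto_of_tendsto_midpointGap_zero hgc hgsc hyab (by simpa using hy)

/-- a.e. convergence from strict convexity when the weak limit of the
convex composition equals the composition of the weak limit. -/
theorem stmt1
    (M : ℕ) (O : Set (EuclideanSpace ℝ (Fin M)))
    (hO : IsOpen O) (hOb : Bornology.IsBounded O)
    (g : ℝ → ℝ) (hgc : ConvexOn ℝ Set.univ g)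
    (a b : ℝ) (hab : a < b) (hgsc : StrictConvexOn ℝ (Set.Ioo a b) g)
    (v : ℕ → EuclideanSpace ℝ (Fin M) → ℝ) (vlim gbar : EuclideanSpace ℝ (Fin M) → ℝ)
    (hvint : ∀ n, IntegrableOn (v n) O)
    (hvlimint : IntegrableOn vlim O)
    (hgvint : ∀ n, IntegrableOn (fun x => g (v n x)) O)
    (hgbarint : IntegrableOn gbar O)
    (hweakv : ∀ φ : EuclideanSpace ℝ (Fin M) → ℝ, Measurable φ → (∃ C, ∀ x, |φ x| ≤ C) →
      Tendsto (fun n => ∫ x in O, v n x * φ x) atTop (𝓝 (∫ x in O, vlim x * φ x)))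
    (hweakg : ∀ φ : EuclideanSpace ℝ (Fin M) → ℝ, Measurable φ → (∃ C, ∀ x, |φ x| ≤ C) →
      Tendsto (fun n => ∫ x in O, g (v n x) * φ x) atTop (𝓝 (∫ x in O, gbar x * φ x)))
    (heq : ∀ᵐ x ∂(volume.restrict O), gbar x = g (vlim x)) :
    ∃ φ : ℕ → ℕ, StrictMono φ ∧
      ∀ᵐ y ∂(volume.restrict O), vlim y ∈ Set.Ioo a b →
        Tendsto (fun n => v (φ n) y) atTop (𝓝 (vlim y)) :=
  stmt1_general M O hOb g hgc a b hgsc v vlim gbar hvint hvlimint hgvint hgbarint hweakv hweakg heq
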